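/- For B, F with finite Haar expansion, π_B* π_F = π_{Δ(B,F)} + (π_{Δ(F,B)})* + D_{B,F}, where Δ(B,F) = Σ_J B_J* F_J χ_J/|J| and D_{B,F}(h_I ⊗ x) = h_I (1/|I|) Σ_{J⊊I} B_J* F_J x; moreover ‖D_{B,F}‖ ≤ sup_{‖e‖=1}‖B_e‖_{BMO(H)} · sup_{‖e‖=1}‖F_e‖_{BMO(H)}. -/

import Mathlib

open MeasureTheory ENNReal ContinuousLinearMap
open scoped Classical NNReal

noncomputable section

/-- A dyadic subinterval of the unit circle `[0,1)`, given by generation `n`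
and position `k < 2 ^ n`; it represents `[k/2^n, (k+1)/2^n)`. -/
structure DyadicInterval where
  n : ℕ
  k : ℕ
  hk : k < 2 ^ n

namespace DyadicInterval

/-- The underlying set of a dyadic interval. -/
def set (I : DyadicInterval) : Set ℝ :=
  Set.Ico ((I.k : ℝ) / 2 ^ I.n) (((I.k : ℝ) + 1) / 2 ^ I.n)

/-- The length `|I|` of a dyadic interval. -/
def len (I : DyadicInterval) : ℝ := ((2 : ℝ) ^ I.n)⁻¹

/-- The left half `I⁺`. -/
def left (I : DyadicInterval) : DyadicInterval :=
  ⟨I.n + 1, 2 * I.k, by have := I.hk; omega⟩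

/-- The right half `I⁻`. -/
def right (I : DyadicInterval) : DyadicInterval :=
  ⟨I.n + 1, 2 * I.k + 1, by have := I.hk; omega⟩

/-- The indicator function `χ_I`. -/
def ind (I : DyadicInterval) : ℝ → ℝ := Set.indicator I.set fun _ => (1 : ℝ)

/-- The Haar function `h_I = |I|^{-1/2} (χ_{I⁺} - χ_{I⁻})`. -/
def haar (I : DyadicInterval) : ℝ → ℝ :=
  fun t => (Real.sqrt I.len)⁻¹ * (I.left.ind t - I.right.ind t)

end DyadicInterval

/-- Normalized Lebesgue measure on the circle, realized as `[0,1) ⊆ ℝ`. -/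
def circleMeasure : Measure ℝ := volume.restrict (Set.Ico (0 : ℝ) 1)

/-- Haar coefficient `f_I = ∫ f h_I`. -/
def haarCoeff {E : Type*} [NormedAddCommGroup E] [NormedSpace ℝ E]
    (f : ℝ → E) (I : DyadicInterval) : E :=
  ∫ t, I.haar t • f t ∂circleMeasure

/-- Average `m_I f = |I|⁻¹ ∫_I f`. -/
def avg {E : Type*} [NormedAddCommGroup E] [NormedSpace ℝ E]
    (f : ℝ → E) (I : DyadicInterval) : E :=
  I.len⁻¹ • ∫ t in I.set, f t

variable {H : Type*} [NormedAddCommGroup H] [InnerProductSpace ℂ H] [CompleteSpace H]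

/-- An operator-valued function with finite formal Haar expansion is recorded by its
finitely supported family of Haar coefficients `B_I ∈ L(H)`. -/
abbrev OpCoeffs (H : Type*) [NormedAddCommGroup H] [InnerProductSpace ℂ H] :=
  DyadicInterval →₀ (H →L[ℂ] H)

/-- The function `B = ∑_I h_I B_I`. -/
def Bfun (b : OpCoeffs H) : ℝ → (H →L[ℂ] H) :=
  fun t => ∑ I ∈ b.support, I.haar t • b I

/-- The dyadic paraproduct `π_B f = ∑_I B_I (m_I f) h_I`. -/
def para (b : OpCoeffs H) (f : ℝ → H) : ℝ → H :=
  fun t => ∑ I ∈ b.support, I.haar t • (b I) (avg f I)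

/-- The operator `Δ_B f = ∑_I B_I (f_I) χ_I / |I|`. -/
def delta (b : OpCoeffs H) (f : ℝ → H) : ℝ → H :=
  fun t => ∑ I ∈ b.support, (I.len⁻¹ * I.ind t) • (b I) (haarCoeff f I)

/-- The Haar projection `P_I B = ∑_{J ⊆ I} h_J B_J` for `B` with finite Haar expansion. -/
def PIB (b : OpCoeffs H) (I : DyadicInterval) : ℝ → (H →L[ℂ] H) :=
  fun t => ∑ J ∈ b.support.filter fun J => J.set ⊆ I.set, J.haar t • b J

/-- The Haar projection `P_I G = ∑_{J ⊆ I} h_J G_J` for a general operator-valued `G`. -/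
def PIBF (G : ℝ → (H →L[ℂ] H)) (I : DyadicInterval) : ℝ → (H →L[ℂ] H) :=
  fun t => ∑' J : {J : DyadicInterval // J.set ⊆ I.set}, (J : DyadicInterval).haar t • haarCoeff G J

/-- The multiplier `Λ_B f = ∑_I (P_I B)(f_I) h_I`. -/
def Lambda (b : OpCoeffs H) (f : ℝ → H) : ℝ → H :=
  fun t => ∑' I : DyadicInterval, I.haar t • (PIB b I t) (haarCoeff f I)

/-- The multiplier `Λ_G f = ∑_I (P_I G)(f_I) h_I` for a general symbol `G`. -/
def LambdaF (G : ℝ → (H →L[ℂ] H)) (f : ℝ → H) : ℝ → H :=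
  fun t => ∑' I : DyadicInterval, I.haar t • (PIBF G I t) (haarCoeff f I)

/-- The paraproduct `π_G f = ∑_I G_I (m_I f) h_I` for a general symbol `G`. -/
def paraF (G : ℝ → (H →L[ℂ] H)) (f : ℝ → H) : ℝ → H :=
  fun t => ∑' I : DyadicInterval, I.haar t • (haarCoeff G I) (avg f I)

/-- The adjoint `π_G^* f = ∑_I G_I^* (f_I) χ_I/|I|` of the paraproduct with symbol `G`. -/
def paraStarF (G : ℝ → (H →L[ℂ] H)) (f : ℝ → H) : ℝ → H :=
  fun t => ∑' I : DyadicInterval,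
    (I.len⁻¹ * I.ind t) • (ContinuousLinearMap.adjoint (haarCoeff G I)) (haarCoeff f I)

/-- The coefficients of `B^*`, i.e. `I ↦ B_I^*`. -/
def adjC (b : OpCoeffs H) : OpCoeffs H :=
  b.mapRange (fun A => ContinuousLinearMap.adjoint A) (by simp)

/-- The sweep `S_B = ∑_I B_I^* B_I χ_I / |I|`. -/
def sweep (b : OpCoeffs H) : ℝ → (H →L[ℂ] H) :=
  fun t => ∑ I ∈ b.support,
    (I.len⁻¹ * I.ind t) • (ContinuousLinearMap.adjoint (b I) ∘L b I)

/-- The bilinear sweep `Δ(B,F) = ∑_J B_J^* F_J χ_J / |J|`. -/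
def DeltaBil (b F : OpCoeffs H) : ℝ → (H →L[ℂ] H) :=
  fun t => ∑ J ∈ b.support ∪ F.support,
    (J.len⁻¹ * J.ind t) • (ContinuousLinearMap.adjoint (b J) ∘L F J)

/-- The block diagonal operator `D_B (h_I ⊗ x) = h_I |I|⁻¹ ∑_{J ⊊ I} B_J^* B_J x`. -/
def Dop (b : OpCoeffs H) (f : ℝ → H) : ℝ → H :=
  fun t => ∑' I : DyadicInterval, I.haar t •
    (I.len⁻¹ • ∑ J ∈ b.support.filter fun J => J.set ⊂ I.set,
      (ContinuousLinearMap.adjoint (b J) ∘L b J)) (haarCoeff f I)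

/-- The block diagonal operator `D_{B,F} (h_I ⊗ x) = h_I |I|⁻¹ ∑_{J ⊊ I} B_J^* F_J x`. -/
def DopBil (b F : OpCoeffs H) (f : ℝ → H) : ℝ → H :=
  fun t => ∑' I : DyadicInterval, I.haar t •
    (I.len⁻¹ • ∑ J ∈ (b.support ∪ F.support).filter fun J => J.set ⊂ I.set,
      (ContinuousLinearMap.adjoint (b J) ∘L F J)) (haarCoeff f I)

/-- The operator norm of a map on `L²(𝕋, H)`, where `L²(𝕋,H)` is realized as the
(mean-zero) closed span of the Haar system `f = ∑_I f_I h_I`. -/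
def l2NormOp (T : (ℝ → H) → (ℝ → H)) : ℝ≥0∞ :=
  ⨆ f : {f : ℝ → H // MemLp f 2 circleMeasure ∧ (∫ t, f t ∂circleMeasure) = 0 ∧
      eLpNorm f 2 circleMeasure ≤ 1},
    eLpNorm (T f.1) 2 circleMeasure

/-- The Haar multiplier norm of a family `(Φ_I)_{I ∈ D}`, i.e. the norm of
`ℓ²(D,H) → L²(𝕋,H)`, `(f_I) ↦ ∑_I Φ_I (f_I) h_I`. -/
def multNorm (Φ : DyadicInterval → ℝ → (H →L[ℂ] H)) : ℝ≥0∞ :=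
  ⨆ c : {c : DyadicInterval →₀ H // ∑ I ∈ c.support, ‖c I‖ ^ 2 ≤ 1},
    eLpNorm (fun t => ∑ I ∈ (c : DyadicInterval →₀ H).support,
      I.haar t • (Φ I t) ((c : DyadicInterval →₀ H) I)) 2 circleMeasure

/-- The dyadic BMO norm of a vector-valued function. -/
def bmoNorm {E : Type*} [NormedAddCommGroup E] [NormedSpace ℝ E] (f : ℝ → E) : ℝ≥0∞ :=
  ⨆ I : DyadicInterval,
    ENNReal.ofReal (I.len⁻¹ * ∫ t in I.set, ‖f t - avg f I‖ ^ 2) ^ (1/2 : ℝ)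

/-- The strong BMO norm `‖B‖_{SBMO} = sup_{‖e‖=1} ‖B e‖_{BMO(H)}`. -/
def sbmoNorm (B : ℝ → (H →L[ℂ] H)) : ℝ≥0∞ :=
  ⨆ e : {e : H // ‖e‖ = 1}, bmoNorm fun t => B t e.1

/-- The `BMO_so` norm `‖B‖ = ‖B‖_{SBMO} + ‖B^*‖_{SBMO}`. -/
def bmosoNorm (B : ℝ → (H →L[ℂ] H)) : ℝ≥0∞ :=
  sbmoNorm B + sbmoNorm fun t => ContinuousLinearMap.adjoint (B t)

/-- A family of independent fair random signs `(σ_I)_{I ∈ D}`, modelling the product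
probability space `Σ = {-1,1}^D`. -/
structure SignSpace {Ω : Type*} [MeasurableSpace Ω] (ℙ : Measure Ω)
    (σ : DyadicInterval → Ω → ℝ) : Prop where
  prob : IsProbabilityMeasure ℙ
  meas : ∀ I, Measurable (σ I)
  values : ∀ I, ∀ ω, σ I ω = 1 ∨ σ I ω = -1
  indep : ProbabilityTheory.iIndepFun σ ℙ
  fair : ∀ I, ℙ {ω | σ I ω = 1} = 1/2

end

/-!
Write `A_J = B_J^* F_J`. If `J` is a child of `P` and `ε` is the constant value of `h_P` on `J`
(so `ε² = 1/|P|`), then `χ_J/|J| = χ_P/|P| + ε h_P` and `m_J f = m_P f + ε f_P`, hence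
`χ_J m_J f/|J| - χ_P m_P f/|P| = ε h_P m_P f + (ε χ_P/|P| + h_P/|P|) f_P`. Telescoping along the
dyadic ancestors of `J` down to `[0,1)`, where `m f = 0`, and applying `A_J`, the three families of
terms summed over `J` are exactly `π_{Δ(B,F)} f`, `(π_{Δ(F,B)})^* f` and `D_{B,F} f`.

`D_{B,F}` is block diagonal in the Haar basis, with blocks `T_I = |I|⁻¹ ∑_{J ⊊ I} A_J`. By
Cauchy–Schwarz, `Re ⟨T_I x, y⟩ ≤ (|I|⁻¹ ∑ ‖F_J x‖²)^{1/2} (|I|⁻¹ ∑ ‖B_J y‖²)^{1/2}`, and Bessel's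
inequality on `I` for `F x - m_I (F x)`, whose Haar coefficients for `J ⊆ I` are the `F_J x`,
bounds the first factor by `‖F x‖_{BMO}` (and likewise the second).
-/

namespace DyadicInterval

lemma len_pos (I : DyadicInterval) : 0 < I.len := by unfold len; positivity

lemma left_endpoint_lt (I : DyadicInterval) : (I.k : ℝ) / 2 ^ I.n < (I.k + 1) / 2 ^ I.n := by
  gcongr; linarith

lemma set_nonempty (I : DyadicInterval) : I.set.Nonempty :=
  Set.nonempty_Ico.2 I.left_endpoint_lt

lemma set_subset_Ico (I : DyadicInterval) : I.set ⊆ Set.Ico 0 1 := by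
  refine Set.Ico_subset_Ico (by positivity) ((div_le_one (by positivity)).2 ?_)
  exact_mod_cast I.hk

lemma measurableSet_set (I : DyadicInterval) : MeasurableSet I.set := measurableSet_Ico

lemma volume_set (I : DyadicInterval) : volume I.set = ENNReal.ofReal I.len := by
  rw [set, Real.volume_Ico, len]
  congr 1
  ring

instance (I : DyadicInterval) : IsFiniteMeasure (volume.restrict I.set) :=
  Real.isFiniteMeasure_restrict_Ico _ _

lemma len_left (I : DyadicInterval) : I.left.len = I.len / 2 := by
  simp only [len, left, pow_succ, mul_inv, div_eq_mul_inv]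

lemma len_right (I : DyadicInterval) : I.right.len = I.len / 2 := by
  simp only [len, right, pow_succ, mul_inv, div_eq_mul_inv]

lemma left_set (I : DyadicInterval) :
    I.left.set = Set.Ico ((I.k : ℝ) / 2 ^ I.n) ((2 * I.k + 1 : ℝ) / 2 ^ (I.n + 1)) := by
  simp only [set, left, Nat.cast_mul, Nat.cast_ofNat, pow_succ]
  congr 1
  field_simp

lemma right_set (I : DyadicInterval) :
    I.right.set = Set.Ico ((2 * I.k + 1 : ℝ) / 2 ^ (I.n + 1)) (((I.k : ℝ) + 1) / 2 ^ I.n) := by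
  simp only [set, right, Nat.cast_add, Nat.cast_mul, Nat.cast_ofNat, Nat.cast_one, pow_succ]
  congr 1
  field_simp
  ring

lemma left_union_right (I : DyadicInterval) : I.left.set ∪ I.right.set = I.set := by
  rw [left_set, right_set, Set.Ico_union_Ico_eq_Ico, set] <;>
  · rw [div_le_div_iff₀ (by positivity) (by positivity), pow_succ]
    nlinarith [pow_pos (show (0 : ℝ) < 2 by norm_num) I.n]

lemma disjoint_left_right (I : DyadicInterval) : Disjoint I.left.set I.right.set := by
  rw [left_set, right_set, Set.Ico_disjoint_Ico]
  simp

lemma left_subset (I : DyadicInterval) : I.left.set ⊆ I.set :=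
  I.left_union_right ▸ Set.subset_union_left

lemma right_subset (I : DyadicInterval) : I.right.set ⊆ I.set :=
  I.left_union_right ▸ Set.subset_union_right

lemma ext_of_n_of_k {I J : DyadicInterval} (hn : I.n = J.n) (hk : I.k = J.k) : I = J := by
  cases I; cases J; simp_all

lemma n_le_of_subset {I J : DyadicInterval} (h : I.set ⊆ J.set) : J.n ≤ I.n := by
  have hlen : I.len ≤ J.len := by
    have := measure_mono (μ := volume) h
    rwa [volume_set, volume_set, ENNReal.ofReal_le_ofReal_iff J.len_pos.le] at this
  rw [len, len, inv_le_inv₀ (by positivity) (by positivity)] at hlen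
  exact (pow_le_pow_iff_right₀ (by norm_num : (1 : ℝ) < 2)).1 hlen

lemma set_injective : Function.Injective set := by
  intro I J h
  have hn : I.n = J.n := le_antisymm (n_le_of_subset h.ge) (n_le_of_subset h.le)
  have hk := (Set.Ico_eq_Ico_iff (Or.inl I.left_endpoint_lt)).1 h |>.1
  rw [hn, div_left_inj' (by positivity)] at hk
  exact ext_of_n_of_k hn (by exact_mod_cast hk)

lemma ssubset_iff {I J : DyadicInterval} : J.set ⊂ I.set ↔ J.set ⊆ I.set ∧ J ≠ I := by
  rw [Set.ssubset_iff_subset_ne, set_injective.ne_iff]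

lemma subset_iff_of_n_le {I J : DyadicInterval} (h : J.n ≤ I.n) :
    I.set ⊆ J.set ↔ J.k * 2 ^ (I.n - J.n) ≤ I.k ∧ I.k + 1 ≤ (J.k + 1) * 2 ^ (I.n - J.n) := by
  have hJ : ∀ a : ℝ, a / 2 ^ J.n = a * 2 ^ (I.n - J.n) / 2 ^ I.n := fun a => by
    rw [← Nat.add_sub_of_le h, pow_add, Nat.add_sub_cancel_left,
      mul_div_mul_right _ _ (by positivity)]
  rw [set, set, Set.Ico_subset_Ico_iff I.left_endpoint_lt, hJ, hJ,
    div_le_div_iff_of_pos_right (by positivity), div_le_div_iff_of_pos_right (by positivity)]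
  norm_cast

def ancestor (J : DyadicInterval) (m : ℕ) : DyadicInterval :=
  ⟨m, J.k / 2 ^ (J.n - m), by
    rw [Nat.div_lt_iff_lt_mul (by positivity), ← pow_add]
    exact J.hk.trans_le (Nat.pow_le_pow_right (by norm_num) (by omega))⟩

lemma ancestor_self (J : DyadicInterval) : J.ancestor J.n = J :=
  ext_of_n_of_k rfl (by simp [ancestor])

lemma ancestor_ancestor (J : DyadicInterval) {l m : ℕ} (hm : m ≤ l) (hl : l ≤ J.n) :
    (J.ancestor l).ancestor m = J.ancestor m := by
  refine ext_of_n_of_k rfl ?_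
  simp only [ancestor, Nat.div_div_eq_div_mul, ← pow_add]
  congr 2
  omega

lemma subset_ancestor (J : DyadicInterval) {m : ℕ} (hm : m ≤ J.n) :
    J.set ⊆ (J.ancestor m).set := by
  rw [subset_iff_of_n_le (show (J.ancestor m).n ≤ J.n from hm)]
  have hpos : 0 < 2 ^ (J.n - m) := by positivity
  refine ⟨Nat.div_mul_le_self _ _, ?_⟩
  have := Nat.lt_div_mul_add (a := J.k) hpos
  change J.k + 1 ≤ (J.k / 2 ^ (J.n - m) + 1) * 2 ^ (J.n - m)
  rw [add_mul, one_mul]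
  omega

lemma eq_ancestor_of_subset {I J : DyadicInterval} (h : J.set ⊆ I.set) :
    I = J.ancestor I.n := by
  rw [subset_iff_of_n_le (n_le_of_subset h)] at h
  have hpos : 0 < 2 ^ (J.n - I.n) := by positivity
  refine ext_of_n_of_k rfl (le_antisymm ((Nat.le_div_iff_mul_le hpos).2 h.1) ?_)
  exact Nat.lt_add_one_iff.1 ((Nat.div_lt_iff_lt_mul hpos).2 h.2)

lemma disjoint_of_n_eq {I J : DyadicInterval} (h : I.n = J.n) (hne : I ≠ J) :
    Disjoint I.set J.set := by
  have hk : I.k ≠ J.k := fun hk => hne (ext_of_n_of_k h hk)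
  rw [set, set, Set.Ico_disjoint_Ico, h, min_div_div_right (by positivity),
    max_div_div_right (by positivity)]
  gcongr
  rcases Nat.lt_or_gt_of_ne hk with hlt | hlt
  · exact (min_le_left _ _).trans (le_max_of_le_right (by exact_mod_cast hlt))
  · exact (min_le_right _ _).trans (le_max_of_le_left (by exact_mod_cast hlt))

lemma subset_or_disjoint_of_n_le {I J : DyadicInterval} (h : J.n ≤ I.n) :
    I.set ⊆ J.set ∨ Disjoint I.set J.set := by
  by_cases he : I.ancestor J.n = J
  · exact Or.inl (he ▸ I.subset_ancestor h)
  · exact Or.inr <|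
      (disjoint_of_n_eq (I := I.ancestor J.n) (J := J) rfl he).mono_left (I.subset_ancestor h)

lemma subset_or_subset_or_disjoint (I J : DyadicInterval) :
    I.set ⊆ J.set ∨ J.set ⊆ I.set ∨ Disjoint I.set J.set := by
  rcases le_total J.n I.n with h | h
  · exact (subset_or_disjoint_of_n_le h).imp_right Or.inr
  · rcases subset_or_disjoint_of_n_le h with h' | h'
    · exact Or.inr (Or.inl h')
    · exact Or.inr (Or.inr h'.symm)

lemma n_lt_of_ssubset {I J : DyadicInterval} (h : J.set ⊂ I.set) : I.n < J.n := by
  refine (n_le_of_subset h.subset).lt_of_ne fun hn => (ssubset_iff.1 h).2 ?_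
  rw [eq_ancestor_of_subset h.subset, hn, ancestor_self]

lemma subset_left_or_subset_right_of_ssubset {I J : DyadicInterval} (h : J.set ⊂ I.set) :
    J.set ⊆ I.left.set ∨ J.set ⊆ I.right.set := by
  have hn : I.n + 1 ≤ J.n := n_lt_of_ssubset h
  rcases subset_or_disjoint_of_n_le (J := I.left) hn with hl | hl
  · exact Or.inl hl
  rcases subset_or_disjoint_of_n_le (J := I.right) hn with hr | hr
  · exact Or.inr hr
  obtain ⟨t, ht⟩ := J.set_nonempty
  have := h.subset ht
  rw [← I.left_union_right] at this
  exact absurd this (by simp [hl.notMem_of_mem_left ht, hr.notMem_of_mem_left ht])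

noncomputable def ancestors (J : DyadicInterval) : Finset DyadicInterval :=
  (Finset.range J.n).image J.ancestor

lemma mem_ancestors {I J : DyadicInterval} : I ∈ J.ancestors ↔ J.set ⊂ I.set := by
  simp only [ancestors, Finset.mem_image, Finset.mem_range]
  constructor
  · rintro ⟨m, hm, rfl⟩
    exact ssubset_iff.2 ⟨J.subset_ancestor hm.le, fun he => hm.ne (congrArg n he).symm⟩
  · intro h
    exact ⟨I.n, n_lt_of_ssubset h, (eq_ancestor_of_subset h.subset).symm⟩

lemma eq_left_or_eq_right_of_n_eq_succ {J : DyadicInterval} {n : ℕ} (hJ : J.n = n + 1) :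
    J = (J.ancestor n).left ∨ J = (J.ancestor n).right := by
  have hk : (J.ancestor n).k = J.k / 2 := by simp [ancestor, hJ]
  rcases Nat.even_or_odd J.k with ⟨m, hm⟩ | ⟨m, hm⟩
  · exact Or.inl (ext_of_n_of_k hJ (by simp only [left, hk]; omega))
  · exact Or.inr (ext_of_n_of_k hJ (by simp only [right, hk]; omega))

lemma ancestors_eq_insert {J : DyadicInterval} {n : ℕ} (hJ : J.n = n + 1) :
    J.ancestors = insert (J.ancestor n) (J.ancestor n).ancestors := by
  rw [ancestors, ancestors, hJ, Finset.range_add_one, Finset.image_insert]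
  congr 1
  refine Finset.image_congr fun m hm => ?_
  exact (J.ancestor_ancestor (Finset.mem_range.1 hm).le (by omega)).symm

lemma ind_of_mem {I : DyadicInterval} {t : ℝ} (ht : t ∈ I.set) : I.ind t = 1 :=
  Set.indicator_of_mem ht _

lemma ind_of_notMem {I : DyadicInterval} {t : ℝ} (ht : t ∉ I.set) : I.ind t = 0 :=
  Set.indicator_of_notMem ht _

lemma ind_smul {E : Type*} [AddCommGroup E] [Module ℝ E] (I : DyadicInterval) (f : ℝ → E)
    (t : ℝ) : I.ind t • f t = I.set.indicator f t := by
  by_cases ht : t ∈ I.set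
  · rw [ind_of_mem ht, Set.indicator_of_mem ht, one_smul]
  · rw [ind_of_notMem ht, Set.indicator_of_notMem ht, zero_smul]

lemma ind_eq_left_add_right (I : DyadicInterval) (t : ℝ) :
    I.ind t = I.left.ind t + I.right.ind t := by
  simp only [ind, ← I.left_union_right, Set.indicator_union_of_disjoint I.disjoint_left_right]

lemma inv_sqrt_len_mul_self (I : DyadicInterval) : (√I.len)⁻¹ * (√I.len)⁻¹ = I.len⁻¹ := by
  rw [← mul_inv, Real.mul_self_sqrt I.len_pos.le]

lemma haar_of_notMem {I : DyadicInterval} {t : ℝ} (ht : t ∉ I.set) : I.haar t = 0 := by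
  rw [haar, ind_of_notMem fun h => ht (I.left_subset h),
    ind_of_notMem fun h => ht (I.right_subset h), sub_self, mul_zero]

lemma abs_haar_le (I : DyadicInterval) (t : ℝ) : |I.haar t| ≤ (√I.len)⁻¹ := by
  rw [haar, abs_mul, abs_of_pos (by have := I.len_pos; positivity)]
  refine mul_le_of_le_one_right (by positivity) ?_
  by_cases hl : t ∈ I.left.set
  · rw [ind_of_mem hl, ind_of_notMem (I.disjoint_left_right.notMem_of_mem_left hl)]; simp
  · rw [ind_of_notMem hl]
    by_cases hr : t ∈ I.right.set
    · rw [ind_of_mem hr]; simp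
    · rw [ind_of_notMem hr]; simp

lemma measurable_ind (I : DyadicInterval) : Measurable I.ind :=
  measurable_const.indicator I.measurableSet_set

lemma measurable_haar (I : DyadicInterval) : Measurable I.haar :=
  ((measurable_ind _).sub (measurable_ind _)).const_mul _

/-- The value of `h_I` on a dyadic `J ⊊ I`, where `h_I` is constant (junk otherwise). -/
noncomputable def haarValue (I J : DyadicInterval) : ℝ :=
  if J.set ⊆ I.left.set then (√I.len)⁻¹ else -(√I.len)⁻¹

lemma haarValue_mul_self (I J : DyadicInterval) : haarValue I J * haarValue I J = I.len⁻¹ := by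
  unfold haarValue
  split_ifs
  · exact I.inv_sqrt_len_mul_self
  · rw [neg_mul_neg, I.inv_sqrt_len_mul_self]

lemma haar_eq_haarValue {I J : DyadicInterval} (h : J.set ⊂ I.set) {t : ℝ} (ht : t ∈ J.set) :
    I.haar t = haarValue I J := by
  rcases subset_left_or_subset_right_of_ssubset h with hc | hc
  · rw [haar, ind_of_mem (hc ht),
      ind_of_notMem (I.disjoint_left_right.notMem_of_mem_left (hc ht)), haarValue, if_pos hc]
    ring
  · have hl : t ∉ I.left.set := I.disjoint_left_right.notMem_of_mem_right (hc ht)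
    rw [haar, ind_of_notMem hl, ind_of_mem (hc ht), haarValue, if_neg fun h' => hl (h' ht)]
    ring

lemma haarValue_eq_of_subset {I J P : DyadicInterval} (hJP : J.set ⊆ P.set)
    (hPI : P.set ⊂ I.set) : haarValue I J = haarValue I P := by
  obtain ⟨t, ht⟩ := J.set_nonempty
  rw [← haar_eq_haarValue (hJP.trans_ssubset hPI) ht, haar_eq_haarValue hPI (hJP ht)]

lemma haarValue_left (I : DyadicInterval) : haarValue I I.left = (√I.len)⁻¹ :=
  if_pos subset_rfl

lemma haarValue_right (I : DyadicInterval) : haarValue I I.right = -(√I.len)⁻¹ := by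
  refine if_neg fun h => ?_
  obtain ⟨t, ht⟩ := I.right.set_nonempty
  exact I.disjoint_left_right.notMem_of_mem_right ht (h ht)

lemma haar_mul_eq_haarValue_mul {I J : DyadicInterval} (h : J.set ⊂ I.set) {g : ℝ → ℝ}
    (hg : ∀ t ∉ J.set, g t = 0) (t : ℝ) : I.haar t * g t = haarValue I J * g t := by
  by_cases ht : t ∈ J.set
  · rw [haar_eq_haarValue h ht]
  · rw [hg t ht, mul_zero, mul_zero]

lemma haar_mul_eq_zero_of_disjoint {I J : DyadicInterval} (h : Disjoint I.set J.set) {g : ℝ → ℝ}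
    (hg : ∀ t ∉ J.set, g t = 0) (t : ℝ) : I.haar t * g t = 0 := by
  by_cases ht : t ∈ I.set
  · rw [hg t (h.notMem_of_mem_left ht), mul_zero]
  · rw [haar_of_notMem ht, zero_mul]

lemma haar_mul_ind_of_subset {I J : DyadicInterval} (h : I.set ⊆ J.set) (t : ℝ) :
    I.haar t * J.ind t = I.haar t := by
  by_cases ht : t ∈ I.set
  · rw [ind_of_mem (h ht), mul_one]
  · rw [haar_of_notMem ht, zero_mul]

lemma haar_mul_self (I : DyadicInterval) (t : ℝ) : I.haar t * I.haar t = I.len⁻¹ * I.ind t := by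
  rw [ind_eq_left_add_right, ← I.inv_sqrt_len_mul_self, haar]
  by_cases hl : t ∈ I.left.set
  · rw [ind_of_mem hl, ind_of_notMem (I.disjoint_left_right.notMem_of_mem_left hl)]; ring
  · rw [ind_of_notMem hl]
    by_cases hr : t ∈ I.right.set
    · rw [ind_of_mem hr]; ring
    · rw [ind_of_notMem hr]; ring

end DyadicInterval

open DyadicInterval

instance : IsFiniteMeasure circleMeasure := by
  unfold circleMeasure; infer_instance

lemma circleMeasure_restrict_set (I : DyadicInterval) :
    circleMeasure.restrict I.set = volume.restrict I.set := by
  rw [circleMeasure, Measure.restrict_restrict I.measurableSet_set,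
    Set.inter_eq_self_of_subset_left I.set_subset_Ico]

section Integrability

variable {ν : Measure ℝ}

lemma integrable_ind [IsFiniteMeasure ν] (I : DyadicInterval) : Integrable I.ind ν :=
  .of_bound I.measurable_ind.aestronglyMeasurable 1 <| ae_of_all _ fun t => by
    by_cases ht : t ∈ I.set <;> simp [ind_of_mem, ind_of_notMem, ht]

lemma integrable_haar_smul {E : Type*} [NormedAddCommGroup E] [NormedSpace ℝ E]
    (I : DyadicInterval) {g : ℝ → E} (hg : Integrable g ν) :
    Integrable (fun t => I.haar t • g t) ν :=
  hg.bdd_smul _ I.measurable_haar.aestronglyMeasurable (ae_of_all _ I.abs_haar_le)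

lemma integrable_haar [IsFiniteMeasure ν] (I : DyadicInterval) : Integrable I.haar ν := by
  simpa using integrable_haar_smul (ν := ν) I (integrable_const (1 : ℝ))

lemma integrable_ind_volume (I : DyadicInterval) : Integrable I.ind :=
  (integrable_indicator_iff I.measurableSet_set).2 <|
    integrableOn_const (by rw [I.volume_set]; exact ENNReal.ofReal_ne_top)

end Integrability

section Orthogonality

lemma integral_ind (I : DyadicInterval) : ∫ t, I.ind t = I.len := by
  rw [ind, integral_indicator_const _ I.measurableSet_set, measureReal_def, I.volume_set,
    ENNReal.toReal_ofReal I.len_pos.le, smul_eq_mul, mul_one]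

lemma integral_haar (I : DyadicInterval) : ∫ t, I.haar t = 0 := by
  simp only [haar]
  rw [integral_const_mul, integral_sub (integrable_ind_volume _) (integrable_ind_volume _),
    integral_ind, integral_ind, I.len_left, I.len_right, sub_self, mul_zero]

lemma integral_haar_mul_haar (I J : DyadicInterval) :
    ∫ t, I.haar t * J.haar t = if I = J then 1 else 0 := by
  split_ifs with he
  · subst he
    simp_rw [haar_mul_self]
    rw [integral_const_mul, integral_ind, inv_mul_cancel₀ I.len_pos.ne']
  rcases subset_or_subset_or_disjoint I J with h | h | h
  · simp_rw [mul_comm (I.haar _), haar_mul_eq_haarValue_mul (ssubset_iff.2 ⟨h, he⟩)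
      fun t => haar_of_notMem]
    rw [integral_const_mul, integral_haar, mul_zero]
  · simp_rw [haar_mul_eq_haarValue_mul (ssubset_iff.2 ⟨h, Ne.symm he⟩) fun t => haar_of_notMem]
    rw [integral_const_mul, integral_haar, mul_zero]
  · simp_rw [haar_mul_eq_zero_of_disjoint h fun t => haar_of_notMem, integral_zero]

lemma setIntegral_haar_smul_eq_integral {E : Type*} [NormedAddCommGroup E] [NormedSpace ℝ E]
    {I : DyadicInterval} {u : Set ℝ} (hu : I.set ⊆ u) (g : ℝ → E) :
    ∫ t in u, I.haar t • g t = ∫ t, I.haar t • g t :=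
  setIntegral_eq_integral_of_forall_compl_eq_zero fun t ht => by
    rw [haar_of_notMem fun h => ht (hu h), zero_smul]

lemma setIntegral_haar {I : DyadicInterval} {u : Set ℝ} (hu : I.set ⊆ u) :
    ∫ t in u, I.haar t = 0 :=
  (setIntegral_eq_integral_of_forall_compl_eq_zero fun _ ht =>
    haar_of_notMem fun h => ht (hu h)).trans (integral_haar I)

lemma setIntegral_haar_mul_haar {I : DyadicInterval} {u : Set ℝ} (hu : I.set ⊆ u)
    (J : DyadicInterval) : ∫ t in u, I.haar t * J.haar t = if I = J then 1 else 0 :=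
  (setIntegral_haar_smul_eq_integral hu J.haar).trans (integral_haar_mul_haar I J)

lemma integral_haar_mul_ind_circle (I J : DyadicInterval) :
    ∫ t, I.haar t * J.ind t ∂circleMeasure =
      if J.set ⊂ I.set then haarValue I J * J.len else 0 := by
  refine (setIntegral_haar_smul_eq_integral (g := J.ind) I.set_subset_Ico).trans ?_
  simp only [smul_eq_mul]
  split_ifs with h
  · simp_rw [haar_mul_eq_haarValue_mul h fun t => ind_of_notMem]
    rw [integral_const_mul, integral_ind]
  rcases subset_or_subset_or_disjoint I J with h' | h' | h'
  · simp_rw [haar_mul_ind_of_subset h', integral_haar]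
  · obtain rfl : J = I := by_contra fun hne => h (ssubset_iff.2 ⟨h', hne⟩)
    simp_rw [haar_mul_ind_of_subset subset_rfl, integral_haar]
  · simp_rw [haar_mul_eq_zero_of_disjoint h' fun t => ind_of_notMem, integral_zero]

end Orthogonality

section HaarCoefficients

variable {E : Type*} [NormedAddCommGroup E] [NormedSpace ℝ E]

lemma integral_ind_smul_circle (I : DyadicInterval) (f : ℝ → E) :
    ∫ t, I.ind t • f t ∂circleMeasure = ∫ t in I.set, f t := by
  simp_rw [ind_smul, integral_indicator I.measurableSet_set, circleMeasure_restrict_set]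

lemma haarCoeff_eq_sub {f : ℝ → E} (hf : Integrable f circleMeasure) (I : DyadicInterval) :
    haarCoeff f I = (√I.len)⁻¹ • ((∫ t in I.left.set, f t) - ∫ t in I.right.set, f t) := by
  have hind : ∀ J : DyadicInterval, Integrable (fun t => J.ind t • f t) circleMeasure :=
    fun J => by simpa only [ind_smul] using hf.indicator J.measurableSet_set
  simp only [haarCoeff, haar, mul_smul, sub_smul]
  rw [integral_smul, integral_sub (hind _) (hind _), integral_ind_smul_circle,
    integral_ind_smul_circle]

lemma setIntegral_eq_left_add_right {f : ℝ → E} (hf : Integrable f circleMeasure)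
    (I : DyadicInterval) :
    ∫ t in I.set, f t = (∫ t in I.left.set, f t) + ∫ t in I.right.set, f t := by
  have hf' : IntegrableOn f I.set := by
    simpa only [IntegrableOn, circleMeasure_restrict_set] using hf.restrict (s := I.set)
  rw [← I.left_union_right] at hf' ⊢
  exact setIntegral_union I.disjoint_left_right I.right.measurableSet_set
    (hf'.mono_set Set.subset_union_left) (hf'.mono_set Set.subset_union_right)

lemma setIntegral_haar_smul_sum_haar_smul [CompleteSpace E] {u : Set ℝ}
    [IsFiniteMeasure (volume.restrict u)] {I : DyadicInterval} (hI : I.set ⊆ u)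
    (s : Finset DyadicInterval) {v : DyadicInterval → E} (hv : ∀ J ∉ s, v J = 0) :
    ∫ t in u, I.haar t • ∑ J ∈ s, J.haar t • v J = v I := by
  have hint : ∀ J, Integrable (fun t => (I.haar t * J.haar t) • v J) (volume.restrict u) :=
    fun J => (integrable_haar_smul I (integrable_haar J)).smul_const (v J)
  simp only [Finset.smul_sum, smul_smul]
  rw [integral_finsetSum s fun J _ => hint J]
  simp only [integral_smul_const, setIntegral_haar_mul_haar hI, ite_smul, one_smul, zero_smul,
    Finset.sum_ite_eq]
  split_ifs with hs
  · rfl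
  · exact (hv I hs).symm

lemma haarCoeff_sum_ind_smul [CompleteSpace E] (s : Finset DyadicInterval)
    (w : DyadicInterval → E) (I : DyadicInterval) :
    haarCoeff (fun t => ∑ J ∈ s, (J.len⁻¹ * J.ind t) • w J) I =
      ∑ J ∈ s with J.set ⊂ I.set, haarValue I J • w J := by
  have hterm : ∀ J, ∫ t, I.haar t • ((J.len⁻¹ * J.ind t) • w J) ∂circleMeasure =
      if J.set ⊂ I.set then haarValue I J • w J else 0 := fun J => by
    simp_rw [smul_smul, ← mul_assoc, mul_right_comm _ J.len⁻¹]
    rw [integral_smul_const, integral_mul_const, integral_haar_mul_ind_circle]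
    split_ifs
    · rw [mul_assoc, mul_inv_cancel₀ J.len_pos.ne', mul_one]
    · rw [zero_mul, zero_smul]
  simp only [haarCoeff, Finset.smul_sum]
  rw [integral_finsetSum s fun J _ => ?_, Finset.sum_filter]
  · exact Finset.sum_congr rfl fun J _ => hterm J
  exact integrable_haar_smul I (((integrable_ind J).const_mul _).smul_const _)

lemma inv_len_mul_ind_of_child {P J : DyadicInterval} (hJ : J = P.left ∨ J = P.right) (t : ℝ) :
    J.len⁻¹ * J.ind t = P.len⁻¹ * P.ind t + P.haar t * haarValue P J := by
  have hs := P.inv_sqrt_len_mul_self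
  rw [haar, P.ind_eq_left_add_right]
  rcases hJ with rfl | rfl
  · rw [haarValue_left, P.len_left]
    linear_combination -(P.left.ind t - P.right.ind t) * hs
  · rw [haarValue_right, P.len_right]
    linear_combination (P.left.ind t - P.right.ind t) * hs

lemma avg_of_child {f : ℝ → E} (hf : Integrable f circleMeasure) {P J : DyadicInterval}
    (hJ : J = P.left ∨ J = P.right) : avg f J = avg f P + haarValue P J • haarCoeff f P := by
  have hs := P.inv_sqrt_len_mul_self
  have hhalf : (P.len / 2)⁻¹ = 2 * P.len⁻¹ := by rw [inv_div, div_eq_mul_inv]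
  rw [avg, avg, haarCoeff_eq_sub hf, setIntegral_eq_left_add_right hf P, smul_smul]
  rcases hJ with rfl | rfl
  · rw [haarValue_left, hs, P.len_left, hhalf]
    module
  · rw [haarValue_right, neg_mul, hs, P.len_right, hhalf]
    module

lemma inv_len_mul_ind_smul_avg_of_child {f : ℝ → E} (hf : Integrable f circleMeasure)
    {P J : DyadicInterval} (hJ : J = P.left ∨ J = P.right) (t : ℝ) :
    (J.len⁻¹ * J.ind t) • avg f J = (P.len⁻¹ * P.ind t) • avg f P +
      ((P.haar t * haarValue P J) • avg f P +
        (P.len⁻¹ * P.ind t * haarValue P J + P.haar t * P.len⁻¹) • haarCoeff f P) := by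
  rw [inv_len_mul_ind_of_child hJ, avg_of_child hf hJ, ← haarValue_mul_self P J]
  module

lemma avg_eq_zero_of_n_eq_zero {f : ℝ → E} (hmean : ∫ t, f t ∂circleMeasure = 0)
    {J : DyadicInterval} (hJ : J.n = 0) : avg f J = 0 := by
  have hk : J.k = 0 := by simpa [hJ] using J.hk
  have hset : J.set = Set.Ico 0 1 := by rw [DyadicInterval.set, hJ, hk]; norm_num
  rw [avg, hset, ← circleMeasure, hmean, smul_zero]

theorem inv_len_mul_ind_smul_avg_eq_sum_ancestors {f : ℝ → E} (hf : Integrable f circleMeasure)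
    (hmean : ∫ t, f t ∂circleMeasure = 0) (J : DyadicInterval) (t : ℝ) :
    (J.len⁻¹ * J.ind t) • avg f J = ∑ I ∈ J.ancestors,
      ((I.haar t * haarValue I J) • avg f I +
        (I.len⁻¹ * I.ind t * haarValue I J + I.haar t * I.len⁻¹) • haarCoeff f I) := by
  induction hn : J.n generalizing J with
  | zero => simp [ancestors, hn, avg_eq_zero_of_n_eq_zero hmean hn]
  | succ n ih =>
    set P := J.ancestor n
    have hJP : J.set ⊂ P.set := mem_ancestors.1 <|
      Finset.mem_image.2 ⟨n, Finset.mem_range.2 (by omega), rfl⟩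
    have hval : ∀ I ∈ P.ancestors, haarValue I J = haarValue I P := fun I hI =>
      haarValue_eq_of_subset hJP.subset (mem_ancestors.1 hI)
    rw [ancestors_eq_insert hn, Finset.sum_insert fun h => (mem_ancestors.1 h).ne rfl,
      Finset.sum_congr rfl fun I hI => by rw [hval I hI], ← ih P rfl,
      inv_len_mul_ind_smul_avg_of_child hf (eq_left_or_eq_right_of_n_eq_succ hn), add_comm]

end HaarCoefficients

lemma filter_ssubset_eq_empty {S : Finset DyadicInterval} {I : DyadicInterval}
    (hI : I ∉ S.biUnion ancestors) : {J ∈ S | J.set ⊂ I.set} = ∅ :=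
  Finset.filter_eq_empty_iff.2 fun J hJ hJI =>
    hI (Finset.mem_biUnion.2 ⟨J, hJ, mem_ancestors.2 hJI⟩)

lemma tsum_sum_filter_ssubset {M : Type*} [AddCommMonoid M] [TopologicalSpace M]
    (S : Finset DyadicInterval) (g : DyadicInterval → DyadicInterval → M) :
    ∑' I, ∑ J ∈ S with J.set ⊂ I.set, g I J = ∑ J ∈ S, ∑ I ∈ J.ancestors, g I J := by
  rw [tsum_eq_sum (s := S.biUnion ancestors) fun I hI => by
    rw [filter_ssubset_eq_empty hI, Finset.sum_empty]]
  refine Finset.sum_comm' fun I J => ?_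
  simp only [Finset.mem_filter, Finset.mem_biUnion, mem_ancestors]
  exact ⟨fun h => ⟨h.2.2, h.2.1⟩, fun h => ⟨⟨J, h.2, h.1⟩, h.2, h.1⟩⟩

section ParaproductIdentity

variable {H : Type*} [NormedAddCommGroup H] [InnerProductSpace ℂ H] [CompleteSpace H]

lemma adjoint_real_smul (r : ℝ) (A : H →L[ℂ] H) : adjoint (r • A) = r • adjoint A := by
  rw [← Complex.coe_smul, map_smulₛₗ, Complex.conj_ofReal, Complex.coe_smul]

lemma haarCoeff_para (b : OpCoeffs H) (f : ℝ → H) (I : DyadicInterval) :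
    haarCoeff (para b f) I = b I (avg f I) :=
  setIntegral_haar_smul_sum_haar_smul I.set_subset_Ico _ fun J hJ => by
    simp [Finsupp.notMem_support_iff.1 hJ]

lemma haarCoeff_deltaBil (b F : OpCoeffs H) (I : DyadicInterval) :
    haarCoeff (DeltaBil b F) I =
      ∑ J ∈ b.support ∪ F.support with J.set ⊂ I.set, haarValue I J • (adjoint (b J) ∘L F J) :=
  haarCoeff_sum_ind_smul _ _ I

lemma adjoint_haarCoeff_deltaBil (b F : OpCoeffs H) (I : DyadicInterval) :
    adjoint (haarCoeff (DeltaBil F b) I) =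
      ∑ J ∈ b.support ∪ F.support with J.set ⊂ I.set, haarValue I J • (adjoint (b J) ∘L F J) := by
  simp only [haarCoeff_deltaBil, map_sum, adjoint_real_smul, adjoint_comp, adjoint_adjoint,
    Finset.union_comm F.support]

lemma delta_adjC_para_apply (b F : OpCoeffs H) (f : ℝ → H) (t : ℝ) :
    delta (adjC b) (para F f) t =
      ∑ J ∈ b.support ∪ F.support, (J.len⁻¹ * J.ind t) • (adjoint (b J) ∘L F J) (avg f J) := by
  have hsupp : (adjC b).support ⊆ b.support ∪ F.support :=
    Finsupp.support_mapRange.trans Finset.subset_union_left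
  rw [delta, Finset.sum_subset hsupp fun J _ hJ => by simp [Finsupp.notMem_support_iff.1 hJ]]
  simp [adjC, haarCoeff_para]

lemma paraF_deltaBil_apply (b F : OpCoeffs H) (f : ℝ → H) (t : ℝ) :
    paraF (DeltaBil b F) f t = ∑ J ∈ b.support ∪ F.support, ∑ I ∈ J.ancestors,
      (I.haar t * haarValue I J) • (adjoint (b J) ∘L F J) (avg f I) := by
  simp only [paraF, haarCoeff_deltaBil, _root_.sum_apply, _root_.smul_apply, Finset.smul_sum,
    smul_smul]
  exact tsum_sum_filter_ssubset _ _

lemma paraStarF_deltaBil_apply (b F : OpCoeffs H) (f : ℝ → H) (t : ℝ) :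
    paraStarF (DeltaBil F b) f t = ∑ J ∈ b.support ∪ F.support, ∑ I ∈ J.ancestors,
      (I.len⁻¹ * I.ind t * haarValue I J) • (adjoint (b J) ∘L F J) (haarCoeff f I) := by
  simp only [paraStarF, adjoint_haarCoeff_deltaBil, _root_.sum_apply, _root_.smul_apply,
    Finset.smul_sum, smul_smul]
  exact tsum_sum_filter_ssubset _ _

lemma dopBil_apply (b F : OpCoeffs H) (f : ℝ → H) (t : ℝ) :
    DopBil b F f t = ∑ J ∈ b.support ∪ F.support, ∑ I ∈ J.ancestors,
      (I.haar t * I.len⁻¹) • (adjoint (b J) ∘L F J) (haarCoeff f I) := by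
  simp only [DopBil, _root_.smul_apply, _root_.sum_apply, Finset.smul_sum, smul_smul]
  exact tsum_sum_filter_ssubset _ _

theorem delta_adjC_para_eq {f : ℝ → H} (hf : Integrable f circleMeasure)
    (hmean : ∫ t, f t ∂circleMeasure = 0) (b F : OpCoeffs H) (t : ℝ) :
    delta (adjC b) (para F f) t =
      paraF (DeltaBil b F) f t + paraStarF (DeltaBil F b) f t + DopBil b F f t := by
  rw [delta_adjC_para_apply, paraF_deltaBil_apply, paraStarF_deltaBil_apply, dopBil_apply,
    ← Finset.sum_add_distrib, ← Finset.sum_add_distrib]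
  refine Finset.sum_congr rfl fun J _ => ?_
  rw [← map_smul_of_tower, inv_len_mul_ind_smul_avg_eq_sum_ancestors hf hmean, map_sum,
    ← Finset.sum_add_distrib, ← Finset.sum_add_distrib]
  refine Finset.sum_congr rfl fun I _ => ?_
  rw [map_add, map_smul_of_tower, map_smul_of_tower, add_smul, add_assoc]

end ParaproductIdentity

lemma eLpNorm_two_eq_ofReal_sqrt {E : Type*} [NormedAddCommGroup E] {ν : Measure ℝ}
    {f : ℝ → E} (hf : MemLp f 2 ν) :
    eLpNorm f 2 ν = ENNReal.ofReal √(∫ t, ‖f t‖ ^ 2 ∂ν) := by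
  rw [hf.eLpNorm_eq_integral_rpow_norm two_ne_zero ENNReal.ofNat_ne_top, ENNReal.toReal_ofNat,
    Real.sqrt_eq_rpow, one_div]
  simp only [Real.rpow_two]

lemma ofReal_sqrt_sum_sq_le {ι : Type*} (s : Finset ι) {w u : ι → ℝ} {C : ℝ≥0∞}
    (hw : ∀ i ∈ s, ENNReal.ofReal (w i) ≤ C * ENNReal.ofReal (u i)) (hw0 : ∀ i, 0 ≤ w i)
    (hu : ∑ i ∈ s, u i ^ 2 ≤ 1) : ENNReal.ofReal √(∑ i ∈ s, w i ^ 2) ≤ C := by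
  rcases eq_or_ne C ⊤ with rfl | hC
  · exact le_top
  lift C to ℝ≥0 using hC
  have hsq : ∀ i ∈ s, w i ^ 2 ≤ (C * u i) ^ 2 := fun i hi => by
    have := hw i hi
    rw [← ENNReal.ofReal_coe_nnreal, ← ENNReal.ofReal_mul C.coe_nonneg,
      ENNReal.ofReal_le_ofReal_iff'] at this
    rcases this with h | h
    · exact pow_le_pow_left₀ (hw0 i) h 2
    · rw [le_antisymm h (hw0 i), zero_pow two_ne_zero]; positivity
  have hsum : ∑ i ∈ s, w i ^ 2 ≤ (C : ℝ) ^ 2 :=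
    calc ∑ i ∈ s, w i ^ 2 ≤ ∑ i ∈ s, (C * u i) ^ 2 := Finset.sum_le_sum hsq
      _ = C ^ 2 * ∑ i ∈ s, u i ^ 2 := by simp_rw [mul_pow, Finset.mul_sum]
      _ ≤ C ^ 2 := mul_le_of_le_one_right (by positivity) hu
  rw [← ENNReal.ofReal_coe_nnreal]
  exact ENNReal.ofReal_le_ofReal (Real.sqrt_le_iff.2 ⟨C.coe_nonneg, hsum⟩)

section Hilbert

variable {H : Type*} [NormedAddCommGroup H] [InnerProductSpace ℂ H]

open RCLike (re)

local notation "⟪" x ", " y "⟫" => inner ℂ x y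

lemma memLp_sum_haar_smul {ν : Measure ℝ} [IsFiniteMeasure ν] (p : ℝ≥0∞)
    (s : Finset DyadicInterval) (v : DyadicInterval → H) :
    MemLp (fun t => ∑ I ∈ s, I.haar t • v I) p ν :=
  memLp_finsetSum s fun I _ =>
    .of_bound (I.measurable_haar.aestronglyMeasurable.smul_const _) ((√I.len)⁻¹ * ‖v I‖)
      (ae_of_all _ fun t => by
        rw [norm_smul, Real.norm_eq_abs]
        exact mul_le_mul_of_nonneg_right (I.abs_haar_le t) (norm_nonneg _))

lemma re_inner_sum_haar_smul (s : Finset DyadicInterval) (v : DyadicInterval → H) (x : H)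
    (t : ℝ) : re ⟪∑ I ∈ s, I.haar t • v I, x⟫ = ∑ I ∈ s, re ⟪v I, I.haar t • x⟫ := by
  simp only [sum_inner, map_sum, inner_smul_left_eq_smul, inner_smul_right_eq_smul,
    RCLike.smul_re]

lemma integral_norm_sq_sum_haar_smul {u : Set ℝ} [IsFiniteMeasure (volume.restrict u)]
    {s : Finset DyadicInterval} (hs : ∀ I ∈ s, I.set ⊆ u) (v : DyadicInterval → H) :
    ∫ t in u, ‖∑ I ∈ s, I.haar t • v I‖ ^ 2 = ∑ I ∈ s, ‖v I‖ ^ 2 := by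
  have hint : ∀ I K : DyadicInterval,
      Integrable (fun t => I.haar t * K.haar t * re ⟪v K, v I⟫) (volume.restrict u) :=
    fun I K => (integrable_haar_smul I (integrable_haar K)).mul_const _
  simp only [← inner_self_eq_norm_sq (𝕜 := ℂ), re_inner_sum_haar_smul, inner_smul_right_eq_smul,
    inner_sum, map_sum, RCLike.smul_re, Finset.mul_sum, ← mul_assoc]
  rw [integral_finsetSum _ fun I _ => integrable_finsetSum _ fun K _ => hint I K]
  refine Finset.sum_congr rfl fun I hI => ?_
  rw [integral_finsetSum _ fun K _ => hint I K]
  simp_rw [integral_mul_const, setIntegral_haar_mul_haar (hs I hI), ite_mul, one_mul, zero_mul,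
    Finset.sum_ite_eq, if_pos hI]

lemma ofReal_norm_apply_le_of_re_inner_le (T : H →L[ℂ] H) {C : ℝ≥0∞}
    (h : ∀ x y : H, ‖x‖ = 1 → ‖y‖ = 1 → ENNReal.ofReal (re ⟪T x, y⟫) ≤ C) (z : H) :
    ENNReal.ofReal ‖T z‖ ≤ C * ENNReal.ofReal ‖z‖ := by
  have hunit : ∀ x : H, ‖x‖ = 1 → ENNReal.ofReal ‖T x‖ ≤ C := fun x hx => by
    rcases eq_or_ne (T x) 0 with h0 | h0
    · simp [h0]
    have := h x (‖T x‖⁻¹ • T x) hx (norm_smul_inv_norm h0)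
    rwa [inner_smul_right_eq_smul, RCLike.smul_re, inner_self_eq_norm_sq, sq,
      inv_mul_cancel_left₀ (norm_ne_zero_iff.2 h0)] at this
  rcases eq_or_ne z 0 with rfl | hz
  · simp
  have hTz : ‖T z‖ = ‖z‖ * ‖T (‖z‖⁻¹ • z)‖ := by
    rw [map_smul_of_tower, norm_smul, norm_inv, norm_norm,
      mul_inv_cancel_left₀ (norm_ne_zero_iff.2 hz)]
  rw [hTz, ENNReal.ofReal_mul (norm_nonneg _), mul_comm]
  exact mul_le_mul_left (hunit _ (norm_smul_inv_norm hz)) _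

lemma bfun_apply (F : OpCoeffs H) (x : H) (t : ℝ) :
    Bfun F t x = ∑ K ∈ F.support, K.haar t • F K x := by
  simp [Bfun, _root_.sum_apply]

variable [CompleteSpace H]

theorem sum_norm_sq_setIntegral_haar_smul_le {u : Set ℝ}
    [IsFiniteMeasure (volume.restrict u)] {s : Finset DyadicInterval} (hs : ∀ I ∈ s, I.set ⊆ u)
    {g : ℝ → H} (hg : MemLp g 2 (volume.restrict u)) :
    ∑ I ∈ s, ‖∫ t in u, I.haar t • g t‖ ^ 2 ≤ ∫ t in u, ‖g t‖ ^ 2 := by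
  set v := fun I : DyadicInterval => ∫ t in u, I.haar t • g t
  set S := fun t => ∑ I ∈ s, I.haar t • v I
  have hg1 : Integrable g (volume.restrict u) := hg.integrable one_le_two
  have hterm : ∀ I : DyadicInterval,
      Integrable (fun t => re ⟪v I, I.haar t • g t⟫) (volume.restrict u) :=
    fun I => ((integrable_haar_smul I hg1).const_inner (v I)).re
  have hcross : ∫ t in u, re ⟪S t, g t⟫ = ∑ I ∈ s, ‖v I‖ ^ 2 := by
    simp_rw [S, re_inner_sum_haar_smul]
    rw [integral_finsetSum _ fun I _ => hterm I]
    refine Finset.sum_congr rfl fun I _ => ?_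
    rw [integral_re ((integrable_haar_smul I hg1).const_inner (v I)),
      ← inner_self_eq_norm_sq (𝕜 := ℂ)]
    exact congrArg re ((innerSL ℂ (v I)).integral_comp_comm (integrable_haar_smul I hg1))
  have hcross_int : Integrable (fun t => re ⟪S t, g t⟫) (volume.restrict u) := by
    simp_rw [S, re_inner_sum_haar_smul]
    exact integrable_finsetSum _ fun I _ => hterm I
  have hexpand : ∫ t in u, ‖g t - S t‖ ^ 2 =
      (∫ t in u, ‖g t‖ ^ 2) - 2 * ∑ I ∈ s, ‖v I‖ ^ 2 + ∑ I ∈ s, ‖v I‖ ^ 2 := by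
    simp_rw [norm_sub_sq (𝕜 := ℂ), inner_re_symm (g _)]
    have hg2 := hg.integrable_norm_pow two_ne_zero
    rw [integral_add ?_ ((memLp_sum_haar_smul 2 s v).integrable_norm_pow two_ne_zero),
      integral_sub hg2 (hcross_int.const_mul 2), integral_const_mul, hcross,
      integral_norm_sq_sum_haar_smul hs]
    exact hg2.sub (hcross_int.const_mul 2)
  have hnonneg : 0 ≤ ∫ t in u, ‖g t - S t‖ ^ 2 := integral_nonneg fun t => sq_nonneg _
  linarith

lemma setIntegral_haar_smul_bfun_sub_avg (F : OpCoeffs H) (x : H) {I J : DyadicInterval}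
    (hJI : J.set ⊆ I.set) :
    ∫ t in I.set, J.haar t • (Bfun F t x - avg (fun s => Bfun F s x) I) = F J x := by
  simp_rw [smul_sub, bfun_apply]
  rw [integral_sub ?_ ((integrable_haar J).smul_const _), integral_smul_const,
    setIntegral_haar hJI, zero_smul, sub_zero,
    setIntegral_haar_smul_sum_haar_smul hJI _ fun K hK => by simp [Finsupp.notMem_support_iff.1 hK]]
  exact integrable_haar_smul J ((memLp_sum_haar_smul 1 _ _).integrable le_rfl)

lemma sum_norm_sq_le_setIntegral_norm_sq_bfun_sub_avg (F : OpCoeffs H) (x : H)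
    (I : DyadicInterval) {A : Finset DyadicInterval} (hA : ∀ J ∈ A, J.set ⊆ I.set) :
    ∑ J ∈ A, ‖F J x‖ ^ 2 ≤ ∫ t in I.set, ‖Bfun F t x - avg (fun s => Bfun F s x) I‖ ^ 2 := by
  have hg : MemLp (fun t => Bfun F t x - avg (fun s => Bfun F s x) I) 2
      (volume.restrict I.set) := by
    simp_rw [bfun_apply]
    exact (memLp_sum_haar_smul 2 _ _).sub (memLp_const _)
  have := sum_norm_sq_setIntegral_haar_smul_le hA hg
  rwa [Finset.sum_congr rfl fun J hJ => by
    rw [setIntegral_haar_smul_bfun_sub_avg F x (hA J hJ)]] at this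

lemma ofReal_sqrt_inv_len_mul_sum_le_sbmoNorm (F : OpCoeffs H) {x : H} (hx : ‖x‖ = 1)
    (I : DyadicInterval) {A : Finset DyadicInterval} (hA : ∀ J ∈ A, J.set ⊆ I.set) :
    ENNReal.ofReal √(I.len⁻¹ * ∑ J ∈ A, ‖F J x‖ ^ 2) ≤ sbmoNorm (Bfun F) := by
  have hlen : 0 ≤ I.len⁻¹ := inv_nonneg.2 I.len_pos.le
  calc ENNReal.ofReal √(I.len⁻¹ * ∑ J ∈ A, ‖F J x‖ ^ 2)
      ≤ ENNReal.ofReal (I.len⁻¹ *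
          ∫ t in I.set, ‖Bfun F t x - avg (fun s => Bfun F s x) I‖ ^ 2) ^ (1 / 2 : ℝ) := by
        rw [ENNReal.ofReal_rpow_of_nonneg (by positivity) (by norm_num), ← Real.sqrt_eq_rpow]
        gcongr
        exact sum_norm_sq_le_setIntegral_norm_sq_bfun_sub_avg F x I hA
    _ ≤ bmoNorm fun t => Bfun F t x := le_iSup (α := ℝ≥0∞) _ I
    _ ≤ sbmoNorm (Bfun F) := le_iSup (α := ℝ≥0∞) (fun e : {e : H // ‖e‖ = 1} => _) ⟨x, hx⟩

noncomputable def dopBilBlock (b F : OpCoeffs H) (I : DyadicInterval) : H →L[ℂ] H :=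
  I.len⁻¹ • ∑ J ∈ b.support ∪ F.support with J.set ⊂ I.set, adjoint (b J) ∘L F J

lemma dopBil_eq_sum (b F : OpCoeffs H) (f : ℝ → H) :
    DopBil b F f = fun t => ∑ I ∈ (b.support ∪ F.support).biUnion ancestors,
      I.haar t • dopBilBlock b F I (haarCoeff f I) :=
  funext fun t => tsum_eq_sum fun I hI => by simp [filter_ssubset_eq_empty hI]

lemma re_inner_dopBilBlock_le (b F : OpCoeffs H) (I : DyadicInterval) (x y : H) :
    re ⟪dopBilBlock b F I x, y⟫ ≤
      √(I.len⁻¹ * ∑ J ∈ b.support ∪ F.support with J.set ⊂ I.set, ‖F J x‖ ^ 2) *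
        √(I.len⁻¹ * ∑ J ∈ b.support ∪ F.support with J.set ⊂ I.set, ‖b J y‖ ^ 2) := by
  have hlen : 0 ≤ I.len⁻¹ := inv_nonneg.2 I.len_pos.le
  calc re ⟪dopBilBlock b F I x, y⟫
      = I.len⁻¹ * ∑ J ∈ b.support ∪ F.support with J.set ⊂ I.set, re ⟪F J x, b J y⟫ := by
        simp [dopBilBlock, _root_.sum_apply, sum_inner, inner_smul_left_eq_smul,
          adjoint_inner_left]
    _ ≤ I.len⁻¹ * ∑ J ∈ b.support ∪ F.support with J.set ⊂ I.set, ‖F J x‖ * ‖b J y‖ := by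
        gcongr with J; exact re_inner_le_norm _ _
    _ ≤ I.len⁻¹ * (√(∑ J ∈ b.support ∪ F.support with J.set ⊂ I.set, ‖F J x‖ ^ 2) *
          √(∑ J ∈ b.support ∪ F.support with J.set ⊂ I.set, ‖b J y‖ ^ 2)) := by
        gcongr; exact Real.sum_mul_le_sqrt_mul_sqrt _ _ _
    _ = _ := by
        rw [Real.sqrt_mul hlen, Real.sqrt_mul hlen, mul_mul_mul_comm, Real.mul_self_sqrt hlen]

lemma ofReal_re_inner_dopBilBlock_le (b F : OpCoeffs H) (I : DyadicInterval) {x y : H}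
    (hx : ‖x‖ = 1) (hy : ‖y‖ = 1) :
    ENNReal.ofReal (re ⟪dopBilBlock b F I x, y⟫) ≤ sbmoNorm (Bfun b) * sbmoNorm (Bfun F) := by
  have hA : ∀ J ∈ {J ∈ b.support ∪ F.support | J.set ⊂ I.set}, J.set ⊆ I.set :=
    fun J hJ => (Finset.mem_filter.1 hJ).2.subset
  rw [mul_comm]
  refine (ENNReal.ofReal_le_ofReal (re_inner_dopBilBlock_le b F I x y)).trans ?_
  rw [ENNReal.ofReal_mul (Real.sqrt_nonneg _)]
  exact mul_le_mul' (ofReal_sqrt_inv_len_mul_sum_le_sbmoNorm F hx I hA)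
    (ofReal_sqrt_inv_len_mul_sum_le_sbmoNorm b hy I hA)

theorem l2NormOp_dopBil_le (b F : OpCoeffs H) :
    l2NormOp (DopBil b F) ≤ sbmoNorm (Bfun b) * sbmoNorm (Bfun F) := by
  refine iSup_le fun ⟨f, hf, _, hf1⟩ => ?_
  set T := (b.support ∪ F.support).biUnion ancestors
  have hT : ∀ I ∈ T, I.set ⊆ Set.Ico 0 1 := fun I _ => I.set_subset_Ico
  have hcoeff : ∑ I ∈ T, ‖haarCoeff f I‖ ^ 2 ≤ 1 := by
    rw [eLpNorm_two_eq_ofReal_sqrt hf, ENNReal.ofReal_le_one, Real.sqrt_le_one] at hf1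
    exact (sum_norm_sq_setIntegral_haar_smul_le hT hf).trans hf1
  have hnorm : ∀ v : DyadicInterval → H,
      ∫ t, ‖∑ I ∈ T, I.haar t • v I‖ ^ 2 ∂circleMeasure = ∑ I ∈ T, ‖v I‖ ^ 2 :=
    integral_norm_sq_sum_haar_smul hT
  rw [dopBil_eq_sum, eLpNorm_two_eq_ofReal_sqrt (memLp_sum_haar_smul 2 T _), hnorm]
  exact ofReal_sqrt_sum_sq_le T (fun I _ => ofReal_norm_apply_le_of_re_inner_le _
    (fun _ _ hx hy => ofReal_re_inner_dopBilBlock_le b F I hx hy) _) (fun _ => norm_nonneg _) hcoeff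

end Hilbert

/-- `π_B^* π_F = π_{Δ(B,F)} + (π_{Δ(F,B)})^* + D_{B,F}`, with
`‖D_{B,F}‖ ≤ sup_{‖e‖=1} ‖B_e‖_{BMO(H)} ⬝ sup_{‖e‖=1} ‖F_e‖_{BMO(H)}`. -/
theorem paraAdj_para_bilinear {H : Type*} [NormedAddCommGroup H] [InnerProductSpace ℂ H] [CompleteSpace H] (b F : OpCoeffs H) :
    (∀ f : ℝ → H, MemLp f 2 circleMeasure → (∫ t, f t ∂circleMeasure) = 0 →
      ∀ᵐ t ∂circleMeasure,
        delta (adjC b) (para F f) t =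
          paraF (DeltaBil b F) f t + paraStarF (DeltaBil F b) f t + DopBil b F f t) ∧
    l2NormOp (DopBil b F) ≤ sbmoNorm (Bfun b) * sbmoNorm (Bfun F) :=
  ⟨fun _ hf hmean => ae_of_all _ (delta_adjC_para_eq (hf.integrable one_le_two) hmean b F),
    l2NormOp_dopBil_le b F⟩
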